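/- arXiv:1106.1337 — 2 statements merged into one kernel-verified Lean document; each statement's English description precedes it below -/
import Mathlib

section
/- Let F be a field, let n ≥ 1 and 0 ≤ k ≤ n, and fix a, b ∈ F. Let h be a polynomial in n variables t_1, …, t_n over F that is symmetric in the first k variables and symmetric in the last n − k variables, and whose total degree is at most n. Suppose that (whenever k ≥ 1) substituting t_1 := a into h yields the zero polynomial, and that (whenever k ≤ n − 1) substituting t_n := b into h yields the zero polynomial. Then there exists a constant λ ∈ F such that h = λ · ∏_{i=1}^{k} (t_i − a) · ∏_{i=k+1}^{n} (t_i − b). (Equivalently: a polynomial of total degree equal to n with these symmetries is determined by the two evaluations at t_1 = a and t_n = b up to adding a constant multiple of this product.) -/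
/-!
By the two symmetries, `h` vanishes under every substitution `tᵢ := cᵢ`, where `cᵢ = a` for
`i < k` and `cᵢ = b` otherwise: swap `tᵢ` with `t₁` (resp. `tₙ`) and use the given vanishing.
So each `tᵢ - cᵢ` divides `h`. These linear factors are pairwise non-associated irreducibles
in the factorial ring `F[t₁, …, tₙ]`, hence their product, of total degree `n`, divides `h`;
as `deg h ≤ n`, the cofactor is a constant.
-/

open MvPolynomial

namespace MvPolynomial

variable {σ R : Type*}

noncomputable def substAt [CommSemiring R] [DecidableEq σ] (i : σ) (c : R) :
    MvPolynomial σ R →ₐ[R] MvPolynomial σ R :=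
  aeval fun j => if j = i then C c else X j

section CommRing

variable [CommRing R] [DecidableEq σ]

theorem X_sub_C_dvd_sub_substAt (i : σ) (c : R) (p : MvPolynomial σ R) :
    X i - C c ∣ p - substAt i c p := by
  -- `substAt i c` induces the identity on `MvPolynomial σ R ⧸ (X i - C c)`.
  let π := Ideal.Quotient.mkₐ R (Ideal.span {X i - C c})
  have hπ : π.comp (substAt i c) = π := by
    refine algHom_ext fun j => ?_
    by_cases hj : j = i
    · subst hj
      simpa [substAt, π, Ideal.Quotient.mkₐ_eq_mk, Ideal.Quotient.eq, Ideal.mem_span_singleton]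
        using dvd_sub_comm.1 dvd_rfl
    · simp [substAt, hj]
  rw [← Ideal.mem_span_singleton, ← Ideal.Quotient.eq]
  exact (DFunLike.congr_fun hπ p).symm

theorem X_sub_C_dvd_of_substAt_eq_zero {i : σ} {c : R} {p : MvPolynomial σ R}
    (hp : substAt i c p = 0) : X i - C c ∣ p := by
  simpa [hp] using X_sub_C_dvd_sub_substAt i c p

theorem substAt_rename_swap (i j : σ) (c : R) (p : MvPolynomial σ R) :
    substAt j c (rename (Equiv.swap i j) p) = rename (Equiv.swap i j) (substAt i c p) := by
  rw [← AlgHom.comp_apply, ← AlgHom.comp_apply]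
  congr 1
  refine algHom_ext fun k => ?_
  simp only [substAt, AlgHom.comp_apply, rename_X, aeval_X]
  by_cases hk : k = i
  · subst hk; simp
  · by_cases hkj : k = j
    · subst hkj; simp [hk, Ne.symm hk]
    · simp [Equiv.swap_apply_of_ne_of_ne hk hkj, hk, hkj]

theorem substAt_eq_zero_of_rename_swap_eq {i j : σ} {c : R} {p : MvPolynomial σ R}
    (hsym : rename (Equiv.swap i j) p = p) (hp : substAt i c p = 0) : substAt j c p = 0 := by
  rw [← hsym, substAt_rename_swap, hp, map_zero]

end CommRing

section Field

variable {F : Type*} [Field F]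

theorem totalDegree_X_sub_C (i : σ) (c : F) : (X i - C c : MvPolynomial σ F).totalDegree = 1 := by
  rw [sub_eq_add_neg, ← C_neg, totalDegree_add_eq_left_of_totalDegree_lt] <;> simp

theorem irreducible_X_sub_C (i : σ) (c : F) : Irreducible (X i - C c : MvPolynomial σ F) := by
  classical
  refine irreducible_of_totalDegree_eq_one (totalDegree_X_sub_C i c) fun x hx => ?_
  refine isUnit_of_dvd_one ?_
  simpa [coeff_X, coeff_C, eq_comm (a := (0 : σ →₀ ℕ))] using hx (Finsupp.single i 1)

theorem X_sub_C_ne_zero (i : σ) (c : F) : (X i - C c : MvPolynomial σ F) ≠ 0 := fun h => by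
  simpa [h] using totalDegree_X_sub_C i c

theorem X_sub_C_not_dvd_X_sub_C [DecidableEq σ] {i j : σ} (hij : i ≠ j) (c d : F) :
    ¬ X i - C c ∣ (X j - C d : MvPolynomial σ F) := by
  rintro ⟨q, hq⟩
  apply X_sub_C_ne_zero j d
  simpa [substAt, hij.symm] using congrArg (substAt i c) hq

theorem prod_X_sub_C_dvd_of_substAt_eq_zero [DecidableEq σ] {s : Finset σ} {c : σ → F}
    {p : MvPolynomial σ F} (hp : ∀ i ∈ s, substAt i (c i) p = 0) :
    ∏ i ∈ s, (X i - C (c i)) ∣ p :=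
  Finset.prod_dvd_of_isRelPrime
    (fun i _ j _ hij => (irreducible_X_sub_C i (c i)).isRelPrime_iff_not_dvd.mpr
      (X_sub_C_not_dvd_X_sub_C hij (c i) (c j)))
    fun i hi => X_sub_C_dvd_of_substAt_eq_zero (hp i hi)

theorem totalDegree_prod_X_sub_C (s : Finset σ) (c : σ → F) :
    (∏ i ∈ s, (X i - C (c i)) : MvPolynomial σ F).totalDegree = s.card := by
  classical
  induction s using Finset.induction_on with
  | empty => simp
  | insert i s hi ih =>
    have hprod : ∏ j ∈ s, (X j - C (c j) : MvPolynomial σ F) ≠ 0 :=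
      Finset.prod_ne_zero_iff.mpr fun j _ => X_sub_C_ne_zero j (c j)
    rw [Finset.prod_insert hi, totalDegree_mul_of_isDomain (X_sub_C_ne_zero i (c i)) hprod,
      totalDegree_X_sub_C, ih, Finset.card_insert_of_notMem hi, add_comm]

end Field

theorem exists_eq_C_mul_of_dvd_of_totalDegree_le [CommRing R] [IsDomain R]
    {p q : MvPolynomial σ R} (hpq : p ∣ q) (hdeg : q.totalDegree ≤ p.totalDegree) :
    ∃ r, q = C r * p := by
  obtain rfl | hq := eq_or_ne q 0
  · exact ⟨0, by simp⟩
  obtain ⟨g, rfl⟩ := hpq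
  have hg : g.totalDegree = 0 := by
    rw [totalDegree_mul_of_isDomain (left_ne_zero_of_mul hq) (right_ne_zero_of_mul hq)] at hdeg
    omega
  exact ⟨g.coeff 0, by rw [mul_comm, ← totalDegree_eq_zero_iff_eq_C.mp hg]⟩

end MvPolynomial

theorem stmt_1_general (F : Type*) [Field F] (n k : ℕ) (hn : 1 ≤ n) (a b : F)
    (h : MvPolynomial (Fin n) F)
    (hsym₁ : ∀ σ : Equiv.Perm (Fin n), (∀ i : Fin n, k ≤ (i : ℕ) → σ i = i) →
      MvPolynomial.rename σ h = h)
    (hsym₂ : ∀ σ : Equiv.Perm (Fin n), (∀ i : Fin n, (i : ℕ) < k → σ i = i) →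
      MvPolynomial.rename σ h = h)
    (hdeg : h.totalDegree ≤ n)
    (ha : 1 ≤ k → MvPolynomial.aeval
      (fun i : Fin n => if i = (⟨0, hn⟩ : Fin n) then MvPolynomial.C a else MvPolynomial.X i)
      h = 0)
    (hb : k ≤ n - 1 → MvPolynomial.aeval
      (fun i : Fin n => if i = (⟨n - 1, Nat.sub_lt hn Nat.one_pos⟩ : Fin n)
        then MvPolynomial.C b else MvPolynomial.X i) h = 0) :
    ∃ lam : F, h = MvPolynomial.C lam *
      ∏ i : Fin n, (if (i : ℕ) < k then MvPolynomial.X i - MvPolynomial.C a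
        else MvPolynomial.X i - MvPolynomial.C b) := by
  let c : Fin n → F := fun i => if (i : ℕ) < k then a else b
  have hvanish : ∀ i, substAt i (c i) h = 0 := by
    intro i
    by_cases hik : (i : ℕ) < k
    · rw [show c i = a from if_pos hik]
      refine substAt_eq_zero_of_rename_swap_eq
        (hsym₁ _ fun j hj => Equiv.swap_apply_of_ne_of_ne ?_ ?_) (ha (by omega))
      · rintro rfl; simp at hj; omega
      · rintro rfl; omega
    · rw [show c i = b from if_neg hik]
      refine substAt_eq_zero_of_rename_swap_eq
        (hsym₂ _ fun j hj => Equiv.swap_apply_of_ne_of_ne ?_ ?_) (hb (by omega))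
      · rintro rfl; simp at hj; omega
      · rintro rfl; omega
  obtain ⟨lam, hlam⟩ := exists_eq_C_mul_of_dvd_of_totalDegree_le
    (prod_X_sub_C_dvd_of_substAt_eq_zero fun i (_ : i ∈ Finset.univ) => hvanish i)
    (by rwa [totalDegree_prod_X_sub_C, Finset.card_univ, Fintype.card_fin])
  refine ⟨lam, hlam.trans ?_⟩
  congr 1
  exact Finset.prod_congr rfl fun i _ => by split_ifs <;> simp [c, *]

/-- A polynomial in `n` variables over a field `F`, symmetric in the first `k` variables
and in the last `n - k` variables, of total degree `≤ n`, which vanishes upon the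
substitution `t₁ := a` (when `k ≥ 1`) and upon the substitution `tₙ := b`
(when `k ≤ n - 1`), is a constant multiple of `∏_{i<k} (tᵢ - a) · ∏_{i≥k} (tᵢ - b)`. -/
theorem stmt_1 (F : Type*) [Field F] (n k : ℕ) (hn : 1 ≤ n) (hk : k ≤ n) (a b : F)
    (h : MvPolynomial (Fin n) F)
    (hsym₁ : ∀ σ : Equiv.Perm (Fin n), (∀ i : Fin n, k ≤ (i : ℕ) → σ i = i) →
      MvPolynomial.rename σ h = h)
    (hsym₂ : ∀ σ : Equiv.Perm (Fin n), (∀ i : Fin n, (i : ℕ) < k → σ i = i) →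
      MvPolynomial.rename σ h = h)
    (hdeg : h.totalDegree ≤ n)
    (ha : 1 ≤ k → MvPolynomial.aeval
      (fun i : Fin n => if i = (⟨0, hn⟩ : Fin n) then MvPolynomial.C a else MvPolynomial.X i)
      h = 0)
    (hb : k ≤ n - 1 → MvPolynomial.aeval
      (fun i : Fin n => if i = (⟨n - 1, Nat.sub_lt hn Nat.one_pos⟩ : Fin n)
        then MvPolynomial.C b else MvPolynomial.X i) h = 0) :
    ∃ lam : F, h = MvPolynomial.C lam *
      ∏ i : Fin n, (if (i : ℕ) < k then MvPolynomial.X i - MvPolynomial.C a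
        else MvPolynomial.X i - MvPolynomial.C b) :=
  stmt_1_general F n k hn a b h hsym₁ hsym₂ hdeg ha hb
end

section
/- For all real numbers z₁, z₂, z₃ > 1, setting x_i = z_i + 1/z_i, the following identity holds, with all series on the right converging absolutely: (1/2)·[ ∏_{i=1}^{3}(z_i − 1)^{−2} + ∏_{i=1}^{3}(z_i + 1)^{−2} ] · ∏_{i=1}^{3}(1 − z_i^{−2})^{−1} = Σ_{u₁,u₂,u₃ ≥ 0} ∏_{i=1}^{3} ((2u_i+1)!/u_i!²)·x_i^{−2u_i−2} + Σ_{j=1}^{3} Σ_{u_j ≥ 0; u_i ≥ 1 for i ≠ j} ((2u_j+1)!/u_j!²)·x_j^{−2u_j−2} · ∏_{i ≠ j} ((2u_i)!·u_i/u_i!²)·x_i^{−2u_i−1}. -/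
/-!
With `t = x⁻²`, both one-variable series are assembled from `∑ C(2n,n) tⁿ = (1 - 4t)^(-1/2)`,
which follows from the convolution identity `∑_{i+j=n} C(2i,i) C(2j,j) = 4ⁿ`, and from
`∑ n C(2n,n) tⁿ`, which the recurrence `(n+1) C(2n+2,n+1) = 2(2n+1) C(2n,n)` expresses through it.
On the curve `x = z + 1/z` one has `√(1 - 4t) = (z² - 1)/(z² + 1)`, and the even and odd series
become `e = w (a + b)/2` and `o = w (a - b)/2` with `a = (z - 1)⁻²`, `b = (z + 1)⁻²`,
`w = (1 - z⁻²)⁻¹`. The triple series factor, and the identity reduces to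
`∏ (eᵢ + oᵢ) + ∏ (eᵢ - oᵢ) = 2 (e₁e₂e₃ + e₁o₂o₃ + o₁e₂o₃ + o₁o₂e₃)`.
-/

/-- The even-type one-variable factor `(2u+1)!/u!² · x^{−2u−2}` in the expansion of the
genus-zero three-point Eynard–Orantin invariant of `x = z + 1/z`, `y = ln z`. -/
noncomputable def evenFactor (x : ℝ) (u : ℕ) : ℝ :=
  ((2 * u + 1).factorial : ℝ) / (u.factorial : ℝ) ^ 2 * x⁻¹ ^ (2 * u + 2)

/-- The odd-type one-variable factor `(2u)!·u/u!² · x^{−2u−1}` in the expansion of the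
genus-zero three-point Eynard–Orantin invariant of `x = z + 1/z`, `y = ln z`. -/
noncomputable def oddFactor (x : ℝ) (u : ℕ) : ℝ :=
  ((2 * u).factorial : ℝ) * (u : ℝ) / (u.factorial : ℝ) ^ 2 * x⁻¹ ^ (2 * u + 1)

open Finset Nat

namespace Nat

theorem two_mul_sum_antidiagonal_mul_centralBinom_mul (n : ℕ) :
    2 * ∑ p ∈ antidiagonal n, p.1 * (centralBinom p.1 * centralBinom p.2)
      = n * ∑ p ∈ antidiagonal n, centralBinom p.1 * centralBinom p.2 := by
  rw [two_mul]
  nth_rewrite 2 [← sum_antidiagonal_swap]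
  rw [← sum_add_distrib, mul_sum]
  refine sum_congr rfl fun p hp => ?_
  rw [HasAntidiagonal.mem_antidiagonal] at hp
  simp only [Prod.fst_swap, Prod.snd_swap, ← hp]
  ring

theorem sum_antidiagonal_succ_mul_centralBinom_mul (n : ℕ) :
    ∑ p ∈ antidiagonal (n + 1), p.1 * (centralBinom p.1 * centralBinom p.2)
      = 4 * ∑ p ∈ antidiagonal n, p.1 * (centralBinom p.1 * centralBinom p.2)
        + 2 * ∑ p ∈ antidiagonal n, centralBinom p.1 * centralBinom p.2 := by
  rw [sum_antidiagonal_succ, zero_mul, zero_add, mul_sum, mul_sum, ← sum_add_distrib]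
  refine sum_congr rfl fun p _ => ?_
  rw [← mul_assoc, succ_mul_centralBinom_succ]
  ring

theorem sum_antidiagonal_centralBinom_mul_centralBinom (n : ℕ) :
    ∑ p ∈ antidiagonal n, centralBinom p.1 * centralBinom p.2 = 4 ^ n := by
  induction n with
  | zero => simp
  | succ n ih =>
    have hsym := two_mul_sum_antidiagonal_mul_centralBinom_mul n
    rw [ih] at hsym
    refine Nat.eq_of_mul_eq_mul_left (by positivity : 0 < n + 1) ?_
    rw [← two_mul_sum_antidiagonal_mul_centralBinom_mul, sum_antidiagonal_succ_mul_centralBinom_mul,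
      ih, pow_succ]
    linarith

theorem factorial_two_mul (n : ℕ) : (2 * n)! = centralBinom n * (n ! * n !) := by
  rw [centralBinom_eq_two_mul_choose,
    ← choose_mul_factorial_mul_factorial (by omega : n ≤ 2 * n), show 2 * n - n = n by omega,
    mul_assoc]

end Nat

theorem HasSum.mul_of_finiteDimensional {ι κ R : Type*} [NormedRing R] [NormedSpace ℝ R]
    [FiniteDimensional ℝ R] {f : ι → R} {g : κ → R} {a b : R} (hf : HasSum f a)
    (hg : HasSum g b) : HasSum (fun p : ι × κ => f p.1 * g p.2) (a * b) :=
  hf.mul hg (summable_mul_of_summable_norm (summable_norm_iff.mpr hf.summable)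
    (summable_norm_iff.mpr hg.summable))

theorem HasSum.mul_mul_of_finiteDimensional {ι κ μ R : Type*} [NormedRing R] [NormedSpace ℝ R]
    [FiniteDimensional ℝ R] {f : ι → R} {g : κ → R} {h : μ → R} {a b c : R} (hf : HasSum f a)
    (hg : HasSum g b) (hh : HasSum h c) :
    HasSum (fun p : ι × κ × μ => f p.1 * g p.2.1 * h p.2.2) (a * b * c) := by
  simpa only [mul_assoc] using hf.mul_of_finiteDimensional (hg.mul_of_finiteDimensional hh)

section CentralBinomSeries

variable {t : ℝ}

theorem centralBinom_mul_pow_le (ht₀ : 0 ≤ t) (n : ℕ) :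
    (centralBinom n : ℝ) * t ^ n ≤ (4 * t) ^ n := by
  rw [mul_pow]
  gcongr
  exact_mod_cast centralBinom_le_four_pow n

theorem summable_centralBinom_mul_pow (ht₀ : 0 ≤ t) (ht : 4 * t < 1) :
    Summable fun n : ℕ => (centralBinom n : ℝ) * t ^ n :=
  (summable_geometric_of_lt_one (by positivity) ht).of_nonneg_of_le
    (fun n => by positivity) (centralBinom_mul_pow_le ht₀)

theorem hasSum_centralBinom_mul_pow (ht₀ : 0 ≤ t) (ht : 4 * t < 1) :
    HasSum (fun n : ℕ => (centralBinom n : ℝ) * t ^ n) (√(1 - 4 * t))⁻¹ := by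
  have hG := summable_centralBinom_mul_pow ht₀ ht
  have hGnorm := summable_norm_iff.mpr hG
  have hsq : (∑' n, (centralBinom n : ℝ) * t ^ n) * ∑' n, (centralBinom n : ℝ) * t ^ n
      = (1 - 4 * t)⁻¹ := by
    rw [tsum_mul_tsum_eq_tsum_sum_antidiagonal_of_summable_norm hGnorm hGnorm,
      ← tsum_geometric_of_lt_one (by positivity) ht]
    refine tsum_congr fun n => ?_
    calc ∑ p ∈ antidiagonal n, (centralBinom p.1 : ℝ) * t ^ p.1 * ((centralBinom p.2) * t ^ p.2)
        = ∑ p ∈ antidiagonal n, ((centralBinom p.1 * centralBinom p.2 : ℕ) : ℝ) * t ^ n :=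
          sum_congr rfl fun p hp => by
            rw [← HasAntidiagonal.mem_antidiagonal.mp hp]; push_cast; ring
      _ = (4 * t) ^ n := by
          rw [← sum_mul, ← Nat.cast_sum, sum_antidiagonal_centralBinom_mul_centralBinom]
          push_cast; ring
  convert hG.hasSum
  rw [← Real.sqrt_inv, ← hsq, Real.sqrt_mul_self (tsum_nonneg fun n => by positivity)]

theorem hasSum_mul_centralBinom_mul_pow (ht₀ : 0 ≤ t) (ht : 4 * t < 1) :
    HasSum (fun n : ℕ => (n : ℝ) * ((centralBinom n : ℝ) * t ^ n))
      (2 * t / (1 - 4 * t) * (√(1 - 4 * t))⁻¹) := by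
  set g : ℕ → ℝ := fun n => (centralBinom n : ℝ) * t ^ n
  set f : ℕ → ℝ := fun n => (n : ℝ) * g n
  have hG := hasSum_centralBinom_mul_pow ht₀ ht
  have hf : Summable f := by
    refine (summable_pow_mul_geometric_of_norm_lt_one 1 (r := 4 * t)
      (by rwa [Real.norm_of_nonneg (by positivity)])).of_nonneg_of_le
      (fun n => by positivity) fun n => ?_
    rw [pow_one]
    exact mul_le_mul_of_nonneg_left (centralBinom_mul_pow_le ht₀ n) n.cast_nonneg
  have hrec : ∀ n, f (n + 1) = t * (4 * f n + 2 * g n) := fun n => by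
    have h := congrArg (fun m : ℕ => (m : ℝ) * t ^ (n + 1)) (succ_mul_centralBinom_succ n)
    simp only [f, g]
    push_cast at h ⊢
    linear_combination h
  have hD := hf.hasSum
  have hshift : HasSum (fun n => f (n + 1)) (∑' n, f n) := by
    simpa [f] using (hasSum_nat_add_iff' 1).mpr hD
  have hD_eq : ∑' n, f n = t * (4 * ∑' n, f n + 2 * (√(1 - 4 * t))⁻¹) :=
    hshift.unique (by simpa only [hrec] using ((hD.mul_left 4).add (hG.mul_left 2)).mul_left t)
  convert hD using 1
  rw [div_mul_eq_mul_div, div_eq_iff (by linarith)]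
  linear_combination -hD_eq

end CentralBinomSeries

section Factors

variable {x : ℝ}

theorem evenFactor_eq (x : ℝ) (n : ℕ) :
    evenFactor x n = x⁻¹ ^ 2 * (2 * ((n : ℝ) * ((centralBinom n : ℝ) * (x⁻¹ ^ 2) ^ n)) +
      (centralBinom n : ℝ) * (x⁻¹ ^ 2) ^ n) := by
  have : (n ! : ℝ) ≠ 0 := by positivity
  rw [evenFactor, factorial_succ, factorial_two_mul, ← pow_mul, pow_succ]
  push_cast
  field_simp
  ring

theorem oddFactor_eq (x : ℝ) (n : ℕ) :
    oddFactor x n = x⁻¹ * ((n : ℝ) * ((centralBinom n : ℝ) * (x⁻¹ ^ 2) ^ n)) := by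
  have : (n ! : ℝ) ≠ 0 := by positivity
  rw [oddFactor, factorial_two_mul, ← pow_mul, pow_succ]
  push_cast
  field_simp
  ring

theorem oddFactor_zero (x : ℝ) : oddFactor x 0 = 0 := by
  simp [oddFactor]

theorem four_mul_inv_sq_lt_one (hx : 2 < |x|) : 4 * x⁻¹ ^ 2 < 1 := by
  have h : 2 / |x| < 1 := (div_lt_one (by linarith)).mpr hx
  calc 4 * x⁻¹ ^ 2 = (2 / |x|) ^ 2 := by rw [div_pow, sq_abs]; ring
    _ < 1 := pow_lt_one₀ (by positivity) h two_ne_zero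

theorem hasSum_evenFactor (hx : 2 < |x|) :
    HasSum (evenFactor x) (x⁻¹ ^ 2 / (1 - 4 * x⁻¹ ^ 2) * (√(1 - 4 * x⁻¹ ^ 2))⁻¹) := by
  have ht := four_mul_inv_sq_lt_one hx
  have hsum := (((hasSum_mul_centralBinom_mul_pow (by positivity) ht).mul_left 2).add
    (hasSum_centralBinom_mul_pow (by positivity) ht)).mul_left (x⁻¹ ^ 2)
  rw [funext (evenFactor_eq x)]
  refine (congrArg (HasSum _) ?_).mpr hsum
  linear_combination (x⁻¹ ^ 2 * (√(1 - 4 * x⁻¹ ^ 2))⁻¹) *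
    mul_inv_cancel₀ (show 1 - 4 * x⁻¹ ^ 2 ≠ 0 by linarith)

theorem hasSum_oddFactor (hx : 2 < |x|) :
    HasSum (oddFactor x) (2 * x⁻¹ ^ 3 / (1 - 4 * x⁻¹ ^ 2) * (√(1 - 4 * x⁻¹ ^ 2))⁻¹) := by
  have hsum := (hasSum_mul_centralBinom_mul_pow (by positivity)
    (four_mul_inv_sq_lt_one hx)).mul_left x⁻¹
  rw [funext (oddFactor_eq x)]
  refine (congrArg (HasSum _) ?_).mpr hsum
  ring

end Factors

section AddInv

variable {z : ℝ}

theorem inv_add_one_div_self (hz : 0 < z) : (z + 1 / z)⁻¹ = z / (z ^ 2 + 1) := by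
  field_simp

theorem two_lt_abs_add_one_div_self (hz : 1 < z) : 2 < |z + 1 / z| := by
  rw [abs_of_pos (by positivity), ← inv_lt_inv₀ (by positivity) two_pos,
    inv_add_one_div_self (by positivity), div_lt_iff₀ (by positivity)]
  nlinarith

theorem one_sub_four_mul_inv_add_one_div_self_sq (hz : 0 < z) :
    1 - 4 * (z + 1 / z)⁻¹ ^ 2 = ((z ^ 2 - 1) / (z ^ 2 + 1)) ^ 2 := by
  rw [inv_add_one_div_self hz]
  field_simp
  ring

theorem sqrt_one_sub_four_mul_inv_add_one_div_self_sq (hz : 1 < z) :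
    √(1 - 4 * (z + 1 / z)⁻¹ ^ 2) = (z ^ 2 - 1) / (z ^ 2 + 1) := by
  rw [one_sub_four_mul_inv_add_one_div_self_sq (by positivity),
    Real.sqrt_sq (div_nonneg (by nlinarith) (by positivity))]

theorem hasSum_evenFactor_add_one_div_self (hz : 1 < z) :
    HasSum (evenFactor (z + 1 / z))
      ((1 - (z ^ 2)⁻¹)⁻¹ * (((z - 1)⁻¹ ^ 2 + (z + 1)⁻¹ ^ 2) / 2)) := by
  convert hasSum_evenFactor (two_lt_abs_add_one_div_self hz) using 1
  rw [sqrt_one_sub_four_mul_inv_add_one_div_self_sq hz,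
    one_sub_four_mul_inv_add_one_div_self_sq (by positivity), inv_add_one_div_self (by positivity)]
  have : z - 1 ≠ 0 := by linarith
  have : z ^ 2 - 1 ≠ 0 := by nlinarith
  field_simp
  ring

theorem hasSum_oddFactor_add_one_div_self_succ (hz : 1 < z) :
    HasSum (fun n => oddFactor (z + 1 / z) (n + 1))
      ((1 - (z ^ 2)⁻¹)⁻¹ * (((z - 1)⁻¹ ^ 2 - (z + 1)⁻¹ ^ 2) / 2)) := by
  have h := (hasSum_nat_add_iff' 1).mpr (hasSum_oddFactor (two_lt_abs_add_one_div_self hz))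
  rw [sum_range_one, oddFactor_zero, sub_zero, sqrt_one_sub_four_mul_inv_add_one_div_self_sq hz,
    one_sub_four_mul_inv_add_one_div_self_sq (by positivity),
    inv_add_one_div_self (by positivity)] at h
  refine (congrArg (HasSum _) ?_).mpr h
  have : z - 1 ≠ 0 := by linarith
  have : z ^ 2 - 1 ≠ 0 := by nlinarith
  field_simp
  ring

end AddInv

/-- The genus-zero three-point expansion for the curve `x = z + 1/z`: for `zᵢ > 1` and
`xᵢ = zᵢ + 1/zᵢ`,
`(1/2)[∏(zᵢ−1)⁻² + ∏(zᵢ+1)⁻²]·∏(1−zᵢ⁻²)⁻¹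
  = Σ_{u₁,u₂,u₃≥0} ∏ᵢ (2uᵢ+1)!/uᵢ!² xᵢ^{−2uᵢ−2}
  + Σ_{j} Σ_{u_j≥0, uᵢ≥1 (i≠j)} (2u_j+1)!/u_j!² x_j^{−2u_j−2} ∏_{i≠j} (2uᵢ)!uᵢ/uᵢ!² xᵢ^{−2uᵢ−1}`,
with all series absolutely convergent. -/
theorem stmt_13 (z₁ z₂ z₃ x₁ x₂ x₃ : ℝ) (h₁ : 1 < z₁) (h₂ : 1 < z₂) (h₃ : 1 < z₃)
    (hx₁ : x₁ = z₁ + 1 / z₁) (hx₂ : x₂ = z₂ + 1 / z₂) (hx₃ : x₃ = z₃ + 1 / z₃) :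
    Summable (fun u : ℕ × ℕ × ℕ =>
      |evenFactor x₁ u.1 * evenFactor x₂ u.2.1 * evenFactor x₃ u.2.2|) ∧
    Summable (fun u : ℕ × ℕ × ℕ =>
      |evenFactor x₁ u.1 * oddFactor x₂ (u.2.1 + 1) * oddFactor x₃ (u.2.2 + 1)|) ∧
    Summable (fun u : ℕ × ℕ × ℕ =>
      |oddFactor x₁ (u.1 + 1) * evenFactor x₂ u.2.1 * oddFactor x₃ (u.2.2 + 1)|) ∧
    Summable (fun u : ℕ × ℕ × ℕ =>
      |oddFactor x₁ (u.1 + 1) * oddFactor x₂ (u.2.1 + 1) * evenFactor x₃ u.2.2|) ∧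
    (1 / 2) * ((z₁ - 1)⁻¹ ^ 2 * (z₂ - 1)⁻¹ ^ 2 * (z₃ - 1)⁻¹ ^ 2 +
        (z₁ + 1)⁻¹ ^ 2 * (z₂ + 1)⁻¹ ^ 2 * (z₃ + 1)⁻¹ ^ 2) *
      ((1 - (z₁ ^ 2)⁻¹)⁻¹ * (1 - (z₂ ^ 2)⁻¹)⁻¹ * (1 - (z₃ ^ 2)⁻¹)⁻¹)
      = (∑' u : ℕ × ℕ × ℕ, evenFactor x₁ u.1 * evenFactor x₂ u.2.1 * evenFactor x₃ u.2.2) +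
        ((∑' u : ℕ × ℕ × ℕ,
            evenFactor x₁ u.1 * oddFactor x₂ (u.2.1 + 1) * oddFactor x₃ (u.2.2 + 1)) +
          (∑' u : ℕ × ℕ × ℕ,
            oddFactor x₁ (u.1 + 1) * evenFactor x₂ u.2.1 * oddFactor x₃ (u.2.2 + 1)) +
          (∑' u : ℕ × ℕ × ℕ,
            oddFactor x₁ (u.1 + 1) * oddFactor x₂ (u.2.1 + 1) * evenFactor x₃ u.2.2)) := by
  subst hx₁ hx₂ hx₃
  have hEEE := (hasSum_evenFactor_add_one_div_self h₁).mul_mul_of_finiteDimensional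
    (hasSum_evenFactor_add_one_div_self h₂) (hasSum_evenFactor_add_one_div_self h₃)
  have hEOO := (hasSum_evenFactor_add_one_div_self h₁).mul_mul_of_finiteDimensional
    (hasSum_oddFactor_add_one_div_self_succ h₂) (hasSum_oddFactor_add_one_div_self_succ h₃)
  have hOEO := (hasSum_oddFactor_add_one_div_self_succ h₁).mul_mul_of_finiteDimensional
    (hasSum_evenFactor_add_one_div_self h₂) (hasSum_oddFactor_add_one_div_self_succ h₃)
  have hOOE := (hasSum_oddFactor_add_one_div_self_succ h₁).mul_mul_of_finiteDimensional
    (hasSum_oddFactor_add_one_div_self_succ h₂) (hasSum_evenFactor_add_one_div_self h₃)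
  refine ⟨hEEE.summable.abs, hEOO.summable.abs, hOEO.summable.abs, hOOE.summable.abs, ?_⟩
  rw [hEEE.tsum_eq, hEOO.tsum_eq, hOEO.tsum_eq, hOOE.tsum_eq]
  ring
end
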